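/- arXiv:2003.06818 — 2 statements merged into one kernel-verified Lean document; each statement's English description precedes it below -/
import Mathlib

section
/- Let u be an element of the commutator ideal F_n' of the free metabelian Lie algebra F_n. Then the inner automorphism ψ_u maps every symmetric element of F_n to a symmetric element (i.e., ψ_u(F_n^{S_n}) ⊆ F_n^{S_n}) if and only if u itself is symmetric, i.e., u ∈ (F_n')^{S_n}. -/
noncomputable section

open LieAlgebra LieModule

variable (K : Type*) [Field K] [CharZero K] (n c : ℕ)

/-- The free Lie algebra `L_n` of rank `n` over `K`. -/
abbrev L := FreeLieAlgebra K (Fin n)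

/-- The generators `x_1, …, x_n` of `L_n`. -/
def X (i : Fin n) : L K n := FreeLieAlgebra.of K i

/-- The automorphic action of a permutation `π ∈ S_n` on `L_n`, permuting the generators. -/
def permMap (π : Equiv.Perm (Fin n)) : L K n →ₗ⁅K⁆ L K n :=
  FreeLieAlgebra.lift K (fun i => FreeLieAlgebra.of K (π i))

/-- The free metabelian Lie algebra `F_n = L_n / L_n''`. -/
abbrev F := L K n ⧸ (derivedSeries K (L K n) 2)

/-- The canonical projection `L_n → F_n`. -/
def Fmk : L K n → F K n := LieSubmodule.Quotient.mk

/-- The images `x_1, …, x_n` of the generators in `F_n`. -/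
def Fx (i : Fin n) : F K n := Fmk K n (X K n i)

/-- An element of `F_n` is symmetric if it is fixed by the induced action of every `π ∈ S_n`.
(The second derived ideal is invariant under the `S_n`-action, so the action descends.) -/
def FIsSymm (p : F K n) : Prop :=
  ∀ π : Equiv.Perm (Fin n), ∀ a : L K n, Fmk K n a = p → Fmk K n (permMap K n π a) = p

/-!
Represent `F_n` by matrices over `K[t_1, …, t_n]` with rows and columns indexed by `Option (Fin n)`,
sending `x_k` to `E_{∅,k} - t_k E_{∅,∅}`. This is faithful on `F_n'`: the left-normed commutators
`[x_i, x_j, x_{k_1}, …, x_{k_m}]` with `j < i` and `j ≤ k_l` span `F_n'`, and the coefficient of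
`t_j t_{k_1} ⋯ t_{k_m}` in the entry `(∅, i)` separates their images. On the image of `F_n'`,
bracketing with `x_k` is multiplication by `t_k`, so for `w = x_1 + ⋯ + x_n` and `z ∈ F_n'`,
`[w, z] = 0` forces `(t_1 + ⋯ + t_n) z = 0`, hence `z = 0`.

The element `w` is symmetric, so if `ψ_u` preserves symmetric elements then `[w, πu - u] = 0`
for every permutation `π`, hence `πu = u`. Conversely, each `π` acts on `F_n` by a Lie algebra
automorphism, so it commutes with `ψ_u` when `u` is symmetric.
-/

namespace LieIdeal

variable {R A B : Type*} [CommRing R] [LieRing A] [LieAlgebra R A] [LieRing B] [LieAlgebra R B]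
  (I : LieIdeal R A)

def mkQ : A →ₗ⁅R⁆ A ⧸ I :=
  { I.toSubmodule.mkQ with map_lie' := rfl }

lemma mkQ_surjective : Function.Surjective I.mkQ :=
  Quot.mk_surjective

def liftQ (f : A →ₗ⁅R⁆ B) (h : I ≤ f.ker) : A ⧸ I →ₗ⁅R⁆ B :=
  { I.toSubmodule.liftQ f.toLinearMap h with
    map_lie' := by rintro ⟨x⟩ ⟨y⟩; exact f.map_lie x y }

@[simp]
lemma ker_mkQ : I.mkQ.ker = I := by
  ext a
  exact LieSubmodule.Quotient.mk_eq_zero'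

end LieIdeal

section LieHom

variable {R A B : Type*} [CommRing R] [LieRing A] [LieAlgebra R A] [LieRing B] [LieAlgebra R B]

lemma LieHom.map_mem_of_forall_lie_mem {f : A →ₗ⁅R⁆ B} {P : Submodule R B} {I J : LieIdeal R A}
    (h : ∀ a ∈ I, ∀ b ∈ J, ⁅f a, f b⁆ ∈ P) {z : A} (hz : z ∈ ⁅I, J⁆) : f z ∈ P := by
  have : (⁅I, J⁆ : LieIdeal R A).toSubmodule ≤ P.comap (f : A →ₗ[R] B) := by
    rw [LieSubmodule.lieIdeal_oper_eq_linear_span', Submodule.span_le]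
    rintro _ ⟨a, ha, b, hb, rfl⟩
    simpa using h a ha b hb
  exact this hz

lemma FreeLieAlgebra.lift_apply_mem {X : Type*} (f : X → B) {S : LieSubalgebra R B}
    (hf : ∀ x, f x ∈ S) (a : FreeLieAlgebra R X) : FreeLieAlgebra.lift R f a ∈ S := by
  let g : FreeLieAlgebra R X →ₗ⁅R⁆ S := FreeLieAlgebra.lift R fun x => ⟨f x, hf x⟩
  have : S.incl.comp g = FreeLieAlgebra.lift R f :=
    FreeLieAlgebra.hom_ext fun x => by simp [g]
  rw [← this]
  exact (g a).2

end LieHom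

section Multiset

variable {ι : Type*} [PartialOrder ι]

lemma Multiset.eq_and_eq_of_cons_eq_cons {j j' : ι} {m m' : Multiset ι} (hm : ∀ k ∈ m, j ≤ k)
    (hm' : ∀ k ∈ m', j' ≤ k) (h : j ::ₘ m = j' ::ₘ m') : j = j' ∧ m = m' := by
  have le_of_mem {j : ι} {m : Multiset ι} (hm : ∀ k ∈ m, j ≤ k) {k} (hk : k ∈ j ::ₘ m) : j ≤ k := by
    rcases Multiset.mem_cons.1 hk with rfl | hk
    exacts [le_rfl, hm k hk]
  obtain rfl : j = j' := le_antisymm (le_of_mem hm (h ▸ Multiset.mem_cons_self _ _))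
    (le_of_mem hm' (h ▸ Multiset.mem_cons_self _ _))
  exact ⟨rfl, (Multiset.cons_inj_right j).1 h⟩

end Multiset

section MvPolynomial

variable {R σ : Type*} [CommSemiring R] [DecidableEq σ]

lemma MvPolynomial.prod_map_X (m : Multiset σ) :
    (m.map X).prod = monomial (R := R) (Multiset.toFinsupp m) 1 := by
  induction m using Multiset.induction_on with
  | empty => simp
  | cons a m ih =>
    rw [Multiset.map_cons, Multiset.prod_cons, ih, ← Multiset.singleton_add, map_add,
      Multiset.toFinsupp_singleton, monomial_single_add, pow_one]

lemma MvPolynomial.sum_X_ne_zero [Nontrivial R] [Fintype σ] (k : σ) :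
    (∑ i, X i : MvPolynomial σ R) ≠ 0 := fun h => by
  simpa [coeff_sum, coeff_X, Finsupp.single_eq_single_iff] using
    congrArg (coeff (Finsupp.single k 1)) h

end MvPolynomial

section LeftNormed

variable (R : Type*) {A B ι : Type*} [CommRing R] [LieRing A] [LieAlgebra R A] [LieRing B]
  [LieAlgebra R B] (x : ι → A)

/-- `leftNormed R x [i₁, …, iₖ] z = ⁅⁅⁅z, x i₁⁆, …⁆, x iₖ⁆`. -/
def leftNormed : List ι → A →ₗ[R] A
  | [] => LinearMap.id
  | i :: l => leftNormed l ∘ₗ (-LieAlgebra.ad R A (x i))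

@[simp]
lemma leftNormed_nil (z : A) : leftNormed R x [] z = z :=
  rfl

lemma leftNormed_cons (i : ι) (l : List ι) (z : A) :
    leftNormed R x (i :: l) z = leftNormed R x l ⁅z, x i⁆ := by
  simp [leftNormed, ← map_neg]

lemma leftNormed_concat (l : List ι) (i : ι) (z : A) :
    leftNormed R x (l ++ [i]) z = ⁅leftNormed R x l z, x i⁆ := by
  induction l generalizing z with
  | nil => simp [leftNormed_cons]
  | cons k l ih => simp only [List.cons_append, leftNormed_cons, ih]

lemma LieHom.map_leftNormed (f : A →ₗ⁅R⁆ B) (l : List ι) (z : A) :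
    f (leftNormed R x l z) = leftNormed R (f ∘ x) l (f z) := by
  induction l generalizing z with
  | nil => rfl
  | cons i l ih => simp only [leftNormed_cons, ih, LieHom.map_lie, Function.comp_apply]

end LeftNormed

section Metabelian

variable {R A ι : Type*} [CommRing R] [LieRing A] [LieAlgebra R A]

lemma lie_mem_derivedSeries_one (a b : A) : ⁅a, b⁆ ∈ derivedSeries R A 1 :=
  LieSubmodule.lie_mem_lie (LieSubmodule.mem_top a) (LieSubmodule.mem_top b)

lemma lie_mem_of_mem_span {s : Set A} {P : Submodule R A} (h : ∀ a ∈ s, ∀ b ∈ s, ⁅a, b⁆ ∈ P)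
    {a b : A} (ha : a ∈ Submodule.span R s) (hb : b ∈ Submodule.span R s) : ⁅a, b⁆ ∈ P := by
  have := Submodule.apply_mem_map₂ (LieAlgebra.ad R A : A →ₗ[R] Module.End R A) ha hb
  rw [Submodule.map₂_span_span] at this
  refine Submodule.span_le.2 ?_ this
  rintro _ ⟨a, ha, b, hb, rfl⟩
  exact h a ha b hb

lemma lie_eq_zero_of_mem_derivedSeries_one (hA : derivedSeries R A 2 = ⊥) {a b : A}
    (ha : a ∈ derivedSeries R A 1) (hb : b ∈ derivedSeries R A 1) : ⁅a, b⁆ = 0 := by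
  have : ⁅a, b⁆ ∈ derivedSeries R A 2 := LieSubmodule.lie_mem_lie ha hb
  rwa [hA, LieSubmodule.mem_bot] at this

lemma lie_lie_comm_of_mem_derivedSeries_one (hA : derivedSeries R A 2 = ⊥) {z : A}
    (hz : z ∈ derivedSeries R A 1) (a b : A) : ⁅⁅z, a⁆, b⁆ = ⁅⁅z, b⁆, a⁆ := by
  rw [lie_lie, lie_eq_zero_of_mem_derivedSeries_one hA hz (lie_mem_derivedSeries_one a b),
    zero_sub, lie_skew]

variable (R) (x : ι → A)

lemma leftNormed_mem_derivedSeries_one {z : A} (hz : z ∈ derivedSeries R A 1) (l : List ι) :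
    leftNormed R x l z ∈ derivedSeries R A 1 := by
  induction l generalizing z with
  | nil => exact hz
  | cons i l ih => rw [leftNormed_cons]; exact ih (lie_mem_derivedSeries_one _ _)

lemma leftNormed_perm (hA : derivedSeries R A 2 = ⊥) {l l' : List ι} (h : l.Perm l') {z : A}
    (hz : z ∈ derivedSeries R A 1) : leftNormed R x l z = leftNormed R x l' z := by
  induction h generalizing z with
  | nil => rfl
  | cons i _ ih => simp only [leftNormed_cons, ih (lie_mem_derivedSeries_one _ _)]
  | swap i k l =>
    simp only [leftNormed_cons, lie_lie_comm_of_mem_derivedSeries_one hA hz]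
  | trans _ _ ih₁ ih₂ => rw [ih₁ hz, ih₂ hz]

@[ext]
structure BasicIndex (ι : Type*) [LinearOrder ι] where
  i : ι
  j : ι
  m : Multiset ι
  j_lt_i : j < i
  j_le_m : ∀ k ∈ m, j ≤ k

def basicComm [LinearOrder ι] (g : BasicIndex ι) : A :=
  leftNormed R x g.m.toList ⁅x g.i, x g.j⁆

variable [LinearOrder ι]

lemma leftNormed_mem_span_basicComm_of_le (hA : derivedSeries R A 2 = ⊥) {i j : ι}
    (hij : j < i) {l : List ι} (hl : ∀ k ∈ l, j ≤ k) :
    leftNormed R x l ⁅x i, x j⁆ ∈ Submodule.span R (Set.range (basicComm R x)) := by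
  refine Submodule.subset_span ⟨⟨i, j, l, hij, fun k hk => hl k (Multiset.mem_coe.1 hk)⟩, ?_⟩
  exact leftNormed_perm R x hA (Multiset.coe_eq_coe.1 (Multiset.coe_toList _))
    (lie_mem_derivedSeries_one _ _)

lemma leftNormed_mem_span_basicComm_of_lt (hA : derivedSeries R A 2 = ⊥) {i j : ι}
    (hij : j < i) (l : List ι) :
    leftNormed R x l ⁅x i, x j⁆ ∈ Submodule.span R (Set.range (basicComm R x)) := by
  by_cases hl : ∀ k ∈ l, j ≤ k
  · exact leftNormed_mem_span_basicComm_of_le R x hA hij hl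
  push Not at hl
  obtain ⟨k, hk, hkj⟩ := hl
  set c := l.toFinset.min' ⟨k, List.mem_toFinset.2 hk⟩
  have hc : c ∈ l := List.mem_toFinset.1 (Finset.min'_mem _ _)
  have hc_le : ∀ k ∈ l.erase c, c ≤ k := fun k hk =>
    Finset.min'_le _ _ (List.mem_toFinset.2 (List.mem_of_mem_erase hk))
  have hcj : c < j := (Finset.min'_le _ _ (List.mem_toFinset.2 hk)).trans_lt hkj
  -- the Jacobi identity moves the smallest letter `c` into the second slot
  have jacobi : leftNormed R x l ⁅x i, x j⁆ =
      leftNormed R x (j :: l.erase c) ⁅x i, x c⁆ - leftNormed R x (i :: l.erase c) ⁅x j, x c⁆ := by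
    rw [leftNormed_perm R x hA (List.perm_cons_erase hc) (lie_mem_derivedSeries_one _ _),
      leftNormed_cons, leftNormed_cons, leftNormed_cons, ← map_sub, lie_lie,
      ← lie_skew (x i) ⁅x j, x c⁆, ← lie_skew (x j) ⁅x i, x c⁆, neg_sub_neg]
  rw [jacobi]
  refine sub_mem (leftNormed_mem_span_basicComm_of_le R x hA (hcj.trans hij) ?_)
    (leftNormed_mem_span_basicComm_of_le R x hA hcj ?_) <;>
  · simp only [List.mem_cons, forall_eq_or_imp]
    exact ⟨by order, hc_le⟩

lemma leftNormed_mem_span_basicComm (hA : derivedSeries R A 2 = ⊥) (i j : ι) (l : List ι) :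
    leftNormed R x l ⁅x i, x j⁆ ∈ Submodule.span R (Set.range (basicComm R x)) := by
  rcases lt_trichotomy j i with h | rfl | h
  · exact leftNormed_mem_span_basicComm_of_lt R x hA h l
  · simp
  · rw [← lie_skew, map_neg]
    exact neg_mem (leftNormed_mem_span_basicComm_of_lt R x hA h l)

lemma lie_mem_span_basicComm (hA : derivedSeries R A 2 = ⊥) {a b : A}
    (ha : a ∈ Set.range x ∪ Set.range (basicComm R x))
    (hb : b ∈ Set.range x ∪ Set.range (basicComm R x)) :
    ⁅a, b⁆ ∈ Submodule.span R (Set.range (basicComm R x)) := by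
  have mem_derived (g : BasicIndex ι) : basicComm R x g ∈ derivedSeries R A 1 :=
    leftNormed_mem_derivedSeries_one R x (lie_mem_derivedSeries_one _ _) _
  have lie_x (g : BasicIndex ι) (k : ι) :
      ⁅basicComm R x g, x k⁆ ∈ Submodule.span R (Set.range (basicComm R x)) := by
    rw [basicComm, ← leftNormed_concat]
    exact leftNormed_mem_span_basicComm R x hA _ _ _
  rcases ha with ⟨i, rfl⟩ | ⟨g, rfl⟩ <;> rcases hb with ⟨k, rfl⟩ | ⟨g', rfl⟩
  · exact leftNormed_mem_span_basicComm R x hA i k []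
  · rw [← lie_skew]
    exact neg_mem (lie_x g' i)
  · exact lie_x g k
  · rw [lie_eq_zero_of_mem_derivedSeries_one hA (mem_derived g) (mem_derived g')]
    exact zero_mem _

lemma derivedSeries_le_span_basicComm (hA : derivedSeries R A 2 = ⊥)
    (hx : LieSubalgebra.lieSpan R A (Set.range x) = ⊤) :
    (derivedSeries R A 1).toSubmodule ≤ Submodule.span R (Set.range (basicComm R x)) := by
  let S : LieSubalgebra R A :=
    { Submodule.span R (Set.range x ∪ Set.range (basicComm R x)) with
      lie_mem' := fun ha hb =>
        Submodule.span_mono Set.subset_union_right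
          (lie_mem_of_mem_span (fun a ha b hb => lie_mem_span_basicComm R x hA ha hb) ha hb) }
  have hS (a : A) : a ∈ S := by
    have : LieSubalgebra.lieSpan R A (Set.range x) ≤ S :=
      LieSubalgebra.lieSpan_le.2 (Submodule.subset_span.trans' Set.subset_union_left)
    exact this (hx ▸ LieSubalgebra.mem_top a)
  rw [show derivedSeries R A 1 = ⁅⊤, ⊤⁆ from rfl, LieSubmodule.lieIdeal_oper_eq_linear_span',
    Submodule.span_le]
  rintro _ ⟨a, -, b, -, rfl⟩
  exact lie_mem_of_mem_span (fun a ha b hb => lie_mem_span_basicComm R x hA ha hb) (hS a) (hS b)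

end Metabelian

section RowMatrix

attribute [local instance] LieRing.ofAssociativeRing

variable (R : Type*) {S m : Type*} [CommRing R] [CommRing S] [Algebra R S] (o : m)

def offDiagRow : Submodule R (Matrix m m S) where
  carrier := {A | (∀ r ≠ o, ∀ c, A r c = 0) ∧ A o o = 0}
  add_mem' hA hB := ⟨fun r hr c => by simp [hA.1 r hr, hB.1 r hr], by simp [hA.2, hB.2]⟩
  zero_mem' := ⟨fun _ _ _ => rfl, rfl⟩
  smul_mem' t A hA := ⟨fun r hr c => by simp [hA.1 r hr], by simp [hA.2]⟩

variable {R o} in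
lemma smul_mem_offDiagRow (s : S) {A : Matrix m m S} (hA : A ∈ offDiagRow R o) :
    s • A ∈ offDiagRow R o :=
  ⟨fun r hr c => by simp [hA.1 r hr], by simp [hA.2]⟩

variable [Fintype m] [DecidableEq m]

def rowSubalgebra : LieSubalgebra R (Matrix m m S) where
  carrier := {A | ∀ r ≠ o, ∀ c, A r c = 0}
  add_mem' hA hB r hr c := by simp [hA r hr, hB r hr]
  zero_mem' _ _ _ := rfl
  smul_mem' t A hA r hr c := by simp [hA r hr]
  lie_mem' {A B} hA hB r hr c := by
    simp [Ring.lie_def, Matrix.mul_apply, hA r hr, hB r hr]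

variable {R o}

lemma mul_eq_smul_of_mem_rowSubalgebra {A B : Matrix m m S} (hA : A ∈ rowSubalgebra R o)
    (hB : B ∈ rowSubalgebra R o) : A * B = A o o • B := by
  ext r c
  by_cases hr : r = o
  · subst hr
    rw [Matrix.mul_apply, Finset.sum_eq_single r (fun k _ hk => by simp [hB k hk]) (by simp)]
    simp
  · simp [Matrix.mul_apply, hA r hr, hB r hr]

lemma lie_eq_of_mem_rowSubalgebra {A B : Matrix m m S} (hA : A ∈ rowSubalgebra R o)
    (hB : B ∈ rowSubalgebra R o) : ⁅A, B⁆ = A o o • B - B o o • A := by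
  rw [Ring.lie_def, mul_eq_smul_of_mem_rowSubalgebra hA hB, mul_eq_smul_of_mem_rowSubalgebra hB hA]

lemma lie_mem_offDiagRow {A B : Matrix m m S} (hA : A ∈ rowSubalgebra R o)
    (hB : B ∈ rowSubalgebra R o) : ⁅A, B⁆ ∈ offDiagRow R o := by
  refine ⟨(rowSubalgebra R o).lie_mem hA hB, ?_⟩
  rw [lie_eq_of_mem_rowSubalgebra hA hB]
  simp [mul_comm]

lemma lie_eq_of_mem_offDiagRow {A B : Matrix m m S} (hA : A ∈ offDiagRow R o)
    (hB : B ∈ rowSubalgebra R o) : ⁅A, B⁆ = -B o o • A := by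
  rw [lie_eq_of_mem_rowSubalgebra hA.1 hB, hA.2, zero_smul, zero_sub, neg_smul]

variable {A : Type*} [LieRing A] [LieAlgebra R A] {f : A →ₗ⁅R⁆ Matrix m m S}

lemma map_mem_offDiagRow (hf : ∀ a, f a ∈ rowSubalgebra R o) {z : A}
    (hz : z ∈ derivedSeries R A 1) : f z ∈ offDiagRow R o :=
  LieHom.map_mem_of_forall_lie_mem (fun a _ b _ => lie_mem_offDiagRow (hf a) (hf b)) hz

lemma map_eq_zero_of_mem_derivedSeries_two (hf : ∀ a, f a ∈ rowSubalgebra R o) {z : A}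
    (hz : z ∈ derivedSeries R A 2) : f z = 0 := by
  refine LieHom.map_mem_of_forall_lie_mem (P := ⊥) (fun a ha b hb => ?_) hz
  rw [lie_eq_of_mem_offDiagRow (map_mem_offDiagRow hf ha) (hf b), (map_mem_offDiagRow hf hb).2]
  simp

end RowMatrix

section FreeMetabelian

variable {K : Type*} [Field K] {n : ℕ}

def Fproj : L K n →ₗ⁅K⁆ F K n :=
  LieIdeal.mkQ _

lemma Fproj_apply (a : L K n) : Fproj a = Fmk K n a :=
  rfl

lemma Fmk_surjective : Function.Surjective (Fmk K n) :=
  LieIdeal.mkQ_surjective _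

lemma derivedSeries_F_two : derivedSeries K (F K n) 2 = ⊥ := by
  rw [← LieIdeal.derivedSeries_map_eq 2 (LieIdeal.mkQ_surjective _), LieIdeal.map_eq_bot_iff]
  exact (LieIdeal.ker_mkQ _).ge

lemma lieSpan_range_Fx : LieSubalgebra.lieSpan K (F K n) (Set.range (Fx K n)) = ⊤ := by
  refine eq_top_iff.2 fun p _ => ?_
  obtain ⟨a, rfl⟩ := Fmk_surjective p
  have : Fproj = FreeLieAlgebra.lift K (Fx K n) :=
    FreeLieAlgebra.hom_ext fun i => by rw [FreeLieAlgebra.lift_of_apply]; rfl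
  rw [← Fproj_apply, this]
  exact FreeLieAlgebra.lift_apply_mem _
    (fun i => LieSubalgebra.subset_lieSpan (Set.mem_range_self i)) a

def permF (π : Equiv.Perm (Fin n)) : F K n →ₗ⁅K⁆ F K n :=
  LieIdeal.liftQ _ (Fproj.comp (permMap K n π)) fun _ ha =>
    (LieIdeal.ker_mkQ _).ge (LieIdeal.derivedSeries_map_le 2 (LieIdeal.mem_map ha))

lemma permF_Fmk (π : Equiv.Perm (Fin n)) (a : L K n) :
    permF π (Fmk K n a) = Fmk K n (permMap K n π a) :=
  rfl

lemma fIsSymm_iff {p : F K n} : FIsSymm K n p ↔ ∀ π, permF π p = p := by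
  obtain ⟨a, rfl⟩ := Fmk_surjective p
  refine ⟨fun h π => h π a rfl, fun h π b hb => ?_⟩
  rw [← permF_Fmk, hb, h]

lemma permF_Fx (π : Equiv.Perm (Fin n)) (i : Fin n) : permF π (Fx K n i) = Fx K n (π i) := by
  simp [Fx, X, permF_Fmk, permMap]

variable (K n) in
lemma fIsSymm_sum_Fx : FIsSymm K n (∑ i, Fx K n i) :=
  fIsSymm_iff.2 fun π => by simp [map_sum, permF_Fx, Equiv.sum_comp]

lemma permF_mem_derivedSeries (π : Equiv.Perm (Fin n)) {z : F K n}
    (hz : z ∈ derivedSeries K (F K n) 1) : permF π z ∈ derivedSeries K (F K n) 1 :=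
  LieIdeal.derivedSeries_map_le 1 (LieIdeal.mem_map hz)

end FreeMetabelian

section Representation

attribute [local instance] LieRing.ofAssociativeRing

open MvPolynomial

variable {K : Type*} [Field K] {n : ℕ}

abbrev ReprSpace (K : Type*) [Field K] (n : ℕ) :=
  Matrix (Option (Fin n)) (Option (Fin n)) (MvPolynomial (Fin n) K)

variable (K) in
def reprGen (k : Fin n) : ReprSpace K n :=
  Matrix.single none (some k) 1 - Matrix.single none none (X k)

lemma reprGen_mem (k : Fin n) : reprGen K k ∈ rowSubalgebra K none := by
  intro r hr c
  simp [reprGen, Ne.symm hr]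

def reprL : L K n →ₗ⁅K⁆ ReprSpace K n :=
  FreeLieAlgebra.lift K (reprGen K)

lemma reprL_mem (a : L K n) : reprL a ∈ rowSubalgebra K none :=
  FreeLieAlgebra.lift_apply_mem _ reprGen_mem a

def reprF : F K n →ₗ⁅K⁆ ReprSpace K n :=
  LieIdeal.liftQ _ reprL fun _ ha => map_eq_zero_of_mem_derivedSeries_two reprL_mem ha

lemma reprF_Fx (k : Fin n) : reprF (Fx K n k) = reprGen K k :=
  FreeLieAlgebra.lift_of_apply _ _

lemma reprF_mem (z : F K n) : reprF z ∈ rowSubalgebra K none := by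
  obtain ⟨a, rfl⟩ := Fmk_surjective z
  exact reprL_mem a

lemma reprF_mem_offDiagRow {z : F K n} (hz : z ∈ derivedSeries K (F K n) 1) :
    reprF z ∈ offDiagRow K none :=
  map_mem_offDiagRow reprF_mem hz

lemma lie_reprGen {A : ReprSpace K n} (hA : A ∈ offDiagRow K none) (k : Fin n) :
    ⁅A, reprGen K k⁆ = X (R := K) k • A := by
  rw [lie_eq_of_mem_offDiagRow hA (reprGen_mem k)]
  simp [reprGen]

lemma leftNormed_reprGen {A : ReprSpace K n} (hA : A ∈ offDiagRow K none) (l : List (Fin n)) :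
    leftNormed K (reprGen K) l A = (l.map (X (R := K))).prod • A := by
  induction l generalizing A with
  | nil => simp
  | cons k l ih =>
    rw [leftNormed_cons, lie_reprGen hA, ih (smul_mem_offDiagRow _ hA), smul_smul,
      List.map_cons, List.prod_cons, mul_comm]

lemma lie_reprGen_reprGen (i j : Fin n) :
    ⁅reprGen K i, reprGen K j⁆ =
      X (R := K) j • Matrix.single none (some i) 1 -
        X (R := K) i • Matrix.single none (some j) 1 := by
  rw [lie_eq_of_mem_rowSubalgebra (reprGen_mem i) (reprGen_mem j)]
  refine Matrix.ext fun r c => ?_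
  rcases r with _ | r <;> rcases c with _ | c <;> simp [reprGen, Matrix.single_apply]
  · ring
  · abel

lemma reprF_basicComm_apply (g : BasicIndex (Fin n)) (i : Fin n) :
    reprF (basicComm K (Fx K n) g) none (some i) =
      (if g.i = i then monomial (Multiset.toFinsupp (g.j ::ₘ g.m)) 1 else 0) -
        if g.j = i then monomial (Multiset.toFinsupp (g.i ::ₘ g.m)) 1 else 0 := by
  have hFx : reprF ∘ Fx K n = reprGen K := funext reprF_Fx
  rw [basicComm, LieHom.map_leftNormed, hFx, LieHom.map_lie, reprF_Fx, reprF_Fx,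
    leftNormed_reprGen (lie_mem_offDiagRow (reprGen_mem _) (reprGen_mem _)), lie_reprGen_reprGen,
    Multiset.prod_map_toList]
  simp only [Matrix.smul_apply, Matrix.sub_apply, Matrix.single_apply, Option.some_inj, true_and]
  simp only [← prod_map_X, Multiset.map_cons, Multiset.prod_cons]
  split_ifs <;> simp [mul_comm, mul_sub]

def basicCoeff (g : BasicIndex (Fin n)) : Module.Dual K (ReprSpace K n) :=
  lcoeff K (Multiset.toFinsupp (g.j ::ₘ g.m)) ∘ₗ Matrix.entryLinearMap K _ none (some g.i)

lemma basicCoeff_reprF_basicComm (g₀ g : BasicIndex (Fin n)) :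
    basicCoeff g₀ (reprF (basicComm K (Fx K n) g)) =
      if g.i = g₀.i ∧ g.j ::ₘ g.m = g₀.j ::ₘ g₀.m then 1 else 0 := by
  have swapped_ne : ¬(g.j = g₀.i ∧ g.i ::ₘ g.m = g₀.j ::ₘ g₀.m) := by
    rintro ⟨hj, hm⟩
    have hmem : g₀.j ∈ g.i ::ₘ g.m := hm ▸ Multiset.mem_cons_self _ _
    have : g.j ≤ g₀.j := by
      rcases Multiset.mem_cons.1 hmem with h | h
      exacts [h ▸ g.j_lt_i.le, g.j_le_m _ h]
    exact (hj ▸ this).not_gt g₀.j_lt_i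
  simp only [basicCoeff, LinearMap.comp_apply, Matrix.entryLinearMap_apply, lcoeff_apply,
    reprF_basicComm_apply, coeff_sub]
  simp only [apply_ite (coeff _), coeff_monomial, coeff_zero, EmbeddingLike.apply_eq_iff_eq,
    ← ite_and]
  rw [if_neg swapped_ne, sub_zero]

lemma basicCoeff_reprF_basicComm_self (g : BasicIndex (Fin n)) :
    basicCoeff g (reprF (basicComm K (Fx K n) g)) = 1 := by
  simp [basicCoeff_reprF_basicComm]

lemma basicCoeff_reprF_basicComm_of_ne {g₀ g : BasicIndex (Fin n)} (h : g ≠ g₀) :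
    basicCoeff g₀ (reprF (basicComm K (Fx K n) g)) = 0 := by
  rw [basicCoeff_reprF_basicComm, if_neg]
  rintro ⟨hi, hm⟩
  obtain ⟨hj, hm⟩ := Multiset.eq_and_eq_of_cons_eq_cons g.j_le_m g₀.j_le_m hm
  exact h (BasicIndex.ext hi hj hm)

lemma linearIndependent_reprF_basicComm :
    LinearIndependent K (reprF.toLinearMap ∘ basicComm K (Fx K n)) :=
  LinearIndependent.of_pairwise_dual_eq_zero_one _ basicCoeff
    (fun _ _ h => basicCoeff_reprF_basicComm_of_ne h.symm) basicCoeff_reprF_basicComm_self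

lemma eq_zero_of_reprF_eq_zero {z : F K n} (hz : z ∈ derivedSeries K (F K n) 1)
    (h : reprF z = 0) : z = 0 :=
  LinearMap.disjoint_ker.1 (Submodule.range_ker_disjoint linearIndependent_reprF_basicComm) z
    (derivedSeries_le_span_basicComm K (Fx K n) derivedSeries_F_two lieSpan_range_Fx hz) h

lemma eq_zero_of_lie_sum_Fx_eq_zero {z : F K n} (hz : z ∈ derivedSeries K (F K n) 1)
    (h : ⁅∑ k, Fx K n k, z⁆ = 0) : z = 0 := by
  refine eq_zero_of_reprF_eq_zero hz ?_
  have hA := reprF_mem_offDiagRow hz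
  have hsmul : (∑ k, X k : MvPolynomial (Fin n) K) • reprF z = 0 := by
    have := congrArg reprF h
    rw [← lie_skew, map_neg, map_zero, neg_eq_zero, LieHom.map_lie, map_sum, lie_sum] at this
    simpa [reprF_Fx, lie_reprGen hA, Finset.sum_smul] using this
  refine Matrix.ext fun r c => ?_
  rcases r with _ | r
  · rcases c with _ | k
    · exact hA.2
    · simpa [sum_X_ne_zero k] using congrFun (congrFun hsmul none) (some k)
  · exact hA.1 _ (Option.some_ne_none r) c

end Representation

theorem inner_aut_preserves_symm_iff_general {K : Type*} [Field K] {n : ℕ}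
    (u : F K n) (hu : u ∈ derivedSeries K (F K n) 1) :
    (∀ v : F K n, FIsSymm K n v → FIsSymm K n (v + ⁅v, u⁆)) ↔ FIsSymm K n u := by
  simp only [fIsSymm_iff]
  refine ⟨fun H π => ?_, fun hu_symm v hv π => ?_⟩
  · have hw := fIsSymm_iff.1 (fIsSymm_sum_Fx K n)
    have h := H _ hw π
    rw [map_add, LieHom.map_lie, hw π, add_right_inj, ← sub_eq_zero, ← lie_sub] at h
    exact sub_eq_zero.1
      (eq_zero_of_lie_sum_Fx_eq_zero (sub_mem (permF_mem_derivedSeries π hu) hu) h)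
  · rw [map_add, LieHom.map_lie, hv π, hu_symm π]

/-- For `u` in the commutator ideal `F_n'` of the free metabelian Lie algebra
`F_n`, the inner automorphism `ψ_u : v ↦ v + [v,u]` maps every symmetric element of `F_n` to a
symmetric element if and only if `u` is itself symmetric, i.e. `u ∈ (F_n')^{S_n}`. -/
theorem inner_aut_preserves_symm_iff {K : Type*} [Field K] [CharZero K] {n : ℕ} (hn : 2 ≤ n)
    (u : F K n) (hu : u ∈ derivedSeries K (F K n) 1) :
    (∀ v : F K n, FIsSymm K n v → FIsSymm K n (v + ⁅v, u⁆)) ↔ FIsSymm K n u :=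
  inner_aut_preserves_symm_iff_general u hu
end
end

section
/- Let u = α_1 x_1 + ⋯ + α_n x_n be a linear combination of the generators of the free metabelian nilpotent of class c Lie algebra L_{n,c} (with α_1, …, α_n ∈ K), and let v = x_1 + ⋯ + x_n. If the bracket [u,v] is a symmetric element of L_{n,c}, then u = α v for some α ∈ K (namely α = α_1 = ⋯ = α_n). -/
noncomputable section

open LieAlgebra LieModule

variable (K : Type*) [Field K] [CharZero K] (n c : ℕ)

/-- The ideal `L_n'' + γ^{c+1}(L_n)` (note `γ^{k+1}(L_n) = lowerCentralSeries K L_n L_n k`). -/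
abbrev nilIdeal : LieIdeal K (L K n) :=
  derivedSeries K (L K n) 2 ⊔ lowerCentralSeries K (L K n) (L K n) c

/-- The free metabelian nilpotent of class `c` Lie algebra `L_{n,c} = L_n/(L_n'' + γ^{c+1}(L_n))`. -/
abbrev Q := L K n ⧸ (nilIdeal K n c)

/-- The canonical projection `L_n → L_{n,c}`. -/
def Qmk : L K n → Q K n c := LieSubmodule.Quotient.mk

/-- The images `x_1, …, x_n` of the generators in `L_{n,c}`. -/
def Qx (i : Fin n) : Q K n c := Qmk K n c (X K n i)

/-- An element of `L_{n,c}` is symmetric if it is fixed by the induced action of every `π ∈ S_n`.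
(The defining ideal is invariant under the `S_n`-action, so the action descends.) -/
def QIsSymm (p : Q K n c) : Prop :=
  ∀ π : Equiv.Perm (Fin n), ∀ a : L K n, Qmk K n c a = p → Qmk K n c (permMap K n π a) = p

/-- The (right) adjoint operator `ad u : v ↦ [v, u]` on `L_{n,c}`. -/
def adr (u : Q K n c) : Module.End K (Q K n c) := -(LieAlgebra.ad K (Q K n c) u)

/-- The truncated exponential `ε_u = ∑_{k=0}^{c-1} (1/k!) (ad u)^k` on `L_{n,c}`. -/
def eps (u : Q K n c) : Module.End K (Q K n c) :=
  ∑ k ∈ Finset.range c, ((Nat.factorial k : K))⁻¹ • (adr K n c u) ^ k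

/-!
Send `x_k` to `(e_k, 0)` in the central extension of the abelian Lie algebra `K^n` by `K` with
cocycle `(x, y) ↦ x_i y_j - x_j y_i`. This algebra is two-step nilpotent, so the map factors
through `L_{n,c}` for `c ≥ 2`, and it sends `[u, v]` to the central element `α_i - α_j`. The
transposition `(i j)` fixes `v` and turns this into `α_j - α_i`, so if `[u, v]` is symmetric then
`2 (α_i - α_j) = 0`.
-/

open LieAlgebra LieModule LieModule.Cohomology

-- Makes `ι → R` an abelian Lie algebra under the commutator bracket.
attribute [local instance] LieRing.ofAssociativeRing

section TwoStepNilpotent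

variable {R L M : Type*} [CommRing R] [LieRing L] [LieAlgebra R L]
  [AddCommGroup M] [Module R M] [LieRingModule L M] [LieModule R L M]

lemma ofProd_symm_sum (c : twoCocycle R L M) {ι : Type*} (s : Finset ι)
    (f : ι → ofTwoCocycle c) :
    (ofProd c).symm (∑ k ∈ s, f k) = ∑ k ∈ s, (ofProd c).symm (f k) :=
  map_sum ((ofProd c).symm.linearEquiv R) f s

variable [IsLieAbelian L] [IsTrivial L M]

lemma mem_twoCocycle_of_isLieAbelian (a : twoCochain R L M) : a ∈ twoCocycle R L M := by
  rw [mem_twoCocycle_iff_of_trivial]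
  intro x y z
  simp [trivial_lie_zero]

variable (c : twoCocycle R L M)

lemma bracket_ofTwoCocycle_of_isLieAbelian (x y : ofTwoCocycle c) :
    ⁅x, y⁆ = ofProd c (0, (c : L →ₗ[R] L →ₗ[R] M) ((ofProd c).symm x).1 ((ofProd c).symm y).1) := by
  simp [bracket_ofTwoCocycle, trivial_lie_zero]

lemma lowerCentralSeries_ofTwoCocycle_two_eq_bot :
    lowerCentralSeries R (ofTwoCocycle c) (ofTwoCocycle c) 2 = ⊥ := by
  have hcentral : lowerCentralSeries R (ofTwoCocycle c) (ofTwoCocycle c) 1 ≤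
      maxTrivSubmodule R (ofTwoCocycle c) (ofTwoCocycle c) := by
    rw [LieModule.lowerCentralSeries_succ, lowerCentralSeries_zero, LieSubmodule.lie_le_iff]
    intro x _ y _
    rw [mem_maxTrivSubmodule]
    intro z
    simp only [bracket_ofTwoCocycle_of_isLieAbelian, map_zero, Equiv.symm_apply_apply]
    exact of_zero c
  rw [eq_bot_iff, LieModule.lowerCentralSeries_succ, LieSubmodule.lie_le_iff]
  intro x _ z hz
  exact (mem_maxTrivSubmodule _ _ _ z).mp (hcentral hz) x

end TwoStepNilpotent

lemma derivedSeries_two_sup_lowerCentralSeries_le_ker {R L A : Type*} [CommRing R] [LieRing L]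
    [LieAlgebra R L] [LieRing A] [LieAlgebra R A] (hA : lowerCentralSeries R A A 2 = ⊥)
    {c : ℕ} (hc : 2 ≤ c) (f : L →ₗ⁅R⁆ A) :
    derivedSeries R L 2 ⊔ lowerCentralSeries R L L c ≤ f.ker := by
  have hlcs : lowerCentralSeries R L L 2 ≤ f.ker := by
    rw [← LieIdeal.map_eq_bot_iff, eq_bot_iff, ← hA]
    exact LieIdeal.map_lowerCentralSeries_le 2
  exact sup_le ((derivedSeries_le_lowerCentralSeries R L 2).trans hlcs)
    ((antitone_lowerCentralSeries R L L hc).trans hlcs)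

section Minor

variable {R : Type*} [CommRing R] {ι : Type*}

instance : IsLieAbelian (ι → R) := isMulCommutative_iff_isLieAbelian.mp inferInstance

def minorCocycle (i j : ι) : twoCocycle R (ι → R) (TrivialLieModule R (ι → R) R) :=
  ⟨⟨((LinearMap.mul R R).compl₁₂ (.proj i) (.proj j) -
        (LinearMap.mul R R).compl₁₂ (.proj j) (.proj i)).compr₂
      (TrivialLieModule.equiv R (ι → R) R).symm.toLinearMap,
    fun x => by simp [mul_comm]⟩, mem_twoCocycle_of_isLieAbelian _⟩

end Minor

section FreeMetabelian

variable {K : Type*} [Field K] {n c : ℕ}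

def linComb (α : Fin n → K) : L K n := ∑ i, α i • X K n i

lemma Qmk_linComb (α : Fin n → K) : Qmk K n c (linComb α) = ∑ i, α i • Qx K n c i := by
  simp only [linComb, Qx, Qmk, ← LieSubmodule.Quotient.mk'_apply, map_sum, map_smul]

lemma Qmk_lie (a b : L K n) : Qmk K n c ⁅a, b⁆ = ⁅Qmk K n c a, Qmk K n c b⁆ :=
  LieSubmodule.Quotient.mk_bracket _ a b

lemma permMap_X (π : Equiv.Perm (Fin n)) (i : Fin n) :
    permMap K n π (X K n i) = X K n (π i) :=
  FreeLieAlgebra.lift_of_apply _ _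

lemma permMap_linComb (π : Equiv.Perm (Fin n)) (α : Fin n → K) :
    permMap K n π (linComb α) = linComb (α ∘ π.symm) := by
  simp only [linComb, map_sum, map_smul, permMap_X, Function.comp_apply]
  rw [← Equiv.sum_comp π (fun k => α (π.symm k) • X K n k)]
  simp

lemma apply_permMap_eq_of_isSymm {A : Type*} [LieRing A] [LieAlgebra K A] (f : L K n →ₗ⁅K⁆ A)
    (hf : nilIdeal K n c ≤ f.ker) {w : L K n} (hw : QIsSymm K n c (Qmk K n c w))
    (π : Equiv.Perm (Fin n)) : f (permMap K n π w) = f w := by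
  have hmem : permMap K n π w - w ∈ nilIdeal K n c := by
    rw [← LieSubmodule.Quotient.mk_eq_zero, map_sub, sub_eq_zero]
    exact hw π w rfl
  simpa [sub_eq_zero] using hf hmem

def evalMinor (i j : Fin n) : L K n →ₗ⁅K⁆ ofTwoCocycle (minorCocycle (R := K) i j) :=
  FreeLieAlgebra.lift K fun k => ofProd _ (Pi.single k 1, 0)

lemma fst_evalMinor_linComb (i j : Fin n) (α : Fin n → K) :
    ((ofProd _).symm (evalMinor i j (linComb α))).1 = α := by
  simp only [evalMinor, linComb, X, map_sum, map_smul, FreeLieAlgebra.lift_of_apply,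
    ofProd_symm_sum, of_symm_smul, Equiv.symm_apply_apply]
  rw [Prod.fst_sum]
  exact (pi_eq_sum_univ' α).symm

lemma snd_evalMinor_lie_linComb (i j : Fin n) (α β : Fin n → K) :
    ((ofProd _).symm (evalMinor i j ⁅linComb α, linComb β⁆)).2 =
      (TrivialLieModule.equiv K (Fin n → K) K).symm (α i * β j - α j * β i) := by
  rw [LieHom.map_lie, bracket_ofTwoCocycle_of_isLieAbelian, Equiv.symm_apply_apply,
    fst_evalMinor_linComb, fst_evalMinor_linComb]
  rfl

lemma eq_of_isSymm_lie_linComb_one [NeZero (2 : K)] (hc : 2 ≤ c) {α : Fin n → K}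
    (h : QIsSymm K n c (Qmk K n c ⁅linComb α, linComb 1⁆)) (i j : Fin n) : α i = α j := by
  have hker : nilIdeal K n c ≤ (evalMinor i j).ker :=
    derivedSeries_two_sup_lowerCentralSeries_le_ker
      (lowerCentralSeries_ofTwoCocycle_two_eq_bot _) hc _
  have hswap := congrArg (fun z => ((ofProd _).symm z).2)
    (apply_permMap_eq_of_isSymm _ hker h (Equiv.swap i j))
  simp only [LieHom.map_lie (permMap K n _), permMap_linComb, snd_evalMinor_lie_linComb] at hswap
  replace hswap := (TrivialLieModule.equiv K (Fin n → K) K).symm.injective hswap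
  simp only [Function.comp_apply, Equiv.symm_swap, Equiv.swap_apply_left, Equiv.swap_apply_right,
    Pi.one_apply, mul_one] at hswap
  have htwice : (2 : K) * (α i - α j) = 0 := by linear_combination -hswap
  exact sub_eq_zero.mp ((mul_eq_zero.mp htwice).resolve_left two_ne_zero)

end FreeMetabelian

theorem linear_bracket_symm_imp_scalar_general {K : Type*} [Field K] [CharZero K] {n c : ℕ}
    (hc : 2 ≤ c) (α : Fin n → K)
    (h : QIsSymm K n c ⁅∑ i : Fin n, α i • Qx K n c i, ∑ i : Fin n, Qx K n c i⁆) :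
    ∃ a : K, (∑ i : Fin n, α i • Qx K n c i) = a • ∑ i : Fin n, Qx K n c i := by
  have hsymm : QIsSymm K n c (Qmk K n c ⁅linComb α, linComb 1⁆) := by
    simpa [Qmk_lie, Qmk_linComb] using h
  obtain ⟨a, ha⟩ : ∃ a, ∀ i, α i = a := by
    rcases isEmpty_or_nonempty (Fin n) with _ | ⟨⟨i₀⟩⟩
    · exact ⟨0, isEmptyElim⟩
    · exact ⟨α i₀, fun i => eq_of_isSymm_lie_linComb_one hc hsymm i i₀⟩
  exact ⟨a, by simp [ha, Finset.smul_sum]⟩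

/-- Let `u = α_1 x_1 + ⋯ + α_n x_n` be a linear combination of the generators
of `L_{n,c}` and `v = x_1 + ⋯ + x_n`. If `[u, v]` is a symmetric element of `L_{n,c}`, then
`u = α v` for some `α ∈ K`. -/
theorem linear_bracket_symm_imp_scalar {K : Type*} [Field K] [CharZero K] {n c : ℕ}
    (hn : 2 ≤ n) (hc : 2 ≤ c) (α : Fin n → K)
    (h : QIsSymm K n c ⁅∑ i : Fin n, α i • Qx K n c i, ∑ i : Fin n, Qx K n c i⁆) :
    ∃ a : K, (∑ i : Fin n, α i • Qx K n c i) = a • ∑ i : Fin n, Qx K n c i :=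
  linear_bracket_symm_imp_scalar_general hc α h
end
end
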